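/- Correctness of ancestral sampling from the optimal policy: for every x ∈ 𝕏, ∏_{n=1}^N exp(Q*_n(x_n|x_{<n}) − V*_n(x_{<n})) = γ*(x); that is, sampling each coordinate sequentially from the softmax of the optimal state-action values yields exactly the normalized target density. -/

import Mathlib

noncomputable section

/-- Extend a prefix `xp` of length `n` by a completion `c` of the remaining
`N - n` coordinates to a full configuration in `𝕏 = Fin N → Fin K`. -/
def extendPrefix (N K n : ℕ) (hn : n ≤ N) (xp : Fin n → Fin K)
    (c : Fin (N - n) → Fin K) : Fin N → Fin K :=
  fun i => if h : i.1 < n then xp ⟨i.1, h⟩ else c ⟨i.1 - n, by omega⟩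

/-- The optimal value of a prefix `xp` of length `n` (`0 ≤ n ≤ N`):
`V*_{n+1}(x_{≤n}) = log ∑_{completions} exp (∑_{n' > n} R_{n'}(x_{≤n'}))`
(steps are `0`-indexed here: `n' : Fin N` corresponds to step `n'+1`, so the
sum ranges over the indices `n' : Fin N` with `n ≤ n'`). -/
def Vstar (N K : ℕ) (R : (n : Fin N) → (Fin (n.1 + 1) → Fin K) → ℝ)
    (n : ℕ) (hn : n ≤ N) (xp : Fin n → Fin K) : ℝ :=
  Real.log (∑ c : Fin (N - n) → Fin K,
    Real.exp (∑ n' ∈ Finset.univ.filter (fun n' : Fin N => n ≤ n'.1),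
      R n' (fun i => extendPrefix N K n hn xp c (Fin.castLE n'.isLt i))))

/-- The optimal state-action value
`Q*ₙ(a | x_{<n}) = Rₙ(x_{<n}∘a) + V*_{n+1}(x_{<n}∘a)`. -/
def Qstar (N K : ℕ) (R : (n : Fin N) → (Fin (n.1 + 1) → Fin K) → ℝ)
    (n : Fin N) (xp : Fin n.1 → Fin K) (a : Fin K) : ℝ :=
  R n (Fin.snoc xp a) + Vstar N K R (n.1 + 1) n.isLt (Fin.snoc xp a)

/-- The unnormalized target density `γ̂(x) = exp (∑ₙ Rₙ(x_{≤n}))`. -/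
def gammaHat (N K : ℕ) (R : (n : Fin N) → (Fin (n.1 + 1) → Fin K) → ℝ)
    (x : Fin N → Fin K) : ℝ :=
  Real.exp (∑ n : Fin N, R n (fun i => x (Fin.castLE n.isLt i)))

/-- The normalizer `Z = ∑ₓ γ̂(x)`. -/
def Z (N K : ℕ) (R : (n : Fin N) → (Fin (n.1 + 1) → Fin K) → ℝ) : ℝ :=
  ∑ x : Fin N → Fin K, gammaHat N K R x

/-- The normalized target density `γ*(x) = γ̂(x) / Z`. -/
def gammaStar (N K : ℕ) (R : (n : Fin N) → (Fin (n.1 + 1) → Fin K) → ℝ)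
    (x : Fin N → Fin K) : ℝ :=
  gammaHat N K R x / Z N K R

/-!
Along a fixed `x`, each factor is `exp (Rₙ(x_{≤n}) + V*_{n+1}(x_{≤n}) − V*ₙ(x_{<n}))`, so the
product is the exponential of `∑ₙ Rₙ(x_{≤n})` plus a telescoping sum of values, which collapses to
`V*_{N+1}(x) − V*_1(∅) = 0 − log Z`.
-/

open Finset

section

variable {N K : ℕ} (R : (n : Fin N) → (Fin (n.1 + 1) → Fin K) → ℝ)

theorem Vstar_full_prefix (xp : Fin N → Fin K) : Vstar N K R N le_rfl xp = 0 := by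
  have hempty : univ.filter (fun n' : Fin N => N ≤ n'.1) = ∅ :=
    filter_false_of_mem fun n' _ => Nat.not_le.mpr n'.isLt
  simp [Vstar, hempty]

theorem Vstar_empty_prefix (xp : Fin 0 → Fin K) :
    Vstar N K R 0 (Nat.zero_le N) xp = Real.log (Z N K R) := by
  simp only [Vstar, Nat.zero_le, filter_true, Z, gammaHat]
  -- completions of the empty prefix are full configurations: `N - 0` and `extendPrefix` reduce
  rfl

theorem Z_pos [Nonempty (Fin N → Fin K)] : 0 < Z N K R :=
  sum_pos (fun _ _ => Real.exp_pos _) univ_nonempty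

theorem gammaStar_eq_exp [Nonempty (Fin N → Fin K)] (x : Fin N → Fin K) :
    gammaStar N K R x =
      Real.exp (∑ n : Fin N, R n (fun i => x (Fin.castLE n.isLt i)) - Real.log (Z N K R)) := by
  rw [Real.exp_sub, Real.exp_log (Z_pos R)]
  rfl

/-- `V*` along the prefixes of `x`, extended by `0` past `N` so that it telescopes over
`Finset.range`. -/
def prefixValue (x : Fin N → Fin K) (m : ℕ) : ℝ :=
  if h : m ≤ N then Vstar N K R m h (fun i => x (Fin.castLE h i)) else 0

theorem prefixValue_of_le (x : Fin N → Fin K) {m : ℕ} (h : m ≤ N) :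
    prefixValue R x m = Vstar N K R m h (fun i => x (Fin.castLE h i)) :=
  dif_pos h

theorem Qstar_prefix (x : Fin N → Fin K) (n : Fin N) :
    Qstar N K R n (fun i => x (Fin.castLE n.isLt.le i)) (x n) =
      R n (fun i => x (Fin.castLE n.isLt i)) + prefixValue R x (n.1 + 1) := by
  have hsnoc : (Fin.snoc (fun i => x (Fin.castLE n.isLt.le i)) (x n) : Fin (n.1 + 1) → Fin K) =
      fun i => x (Fin.castLE n.isLt i) :=
    Fin.snoc_init_self (fun i : Fin (n.1 + 1) => x (Fin.castLE n.isLt i))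
  rw [Qstar, hsnoc, prefixValue_of_le R x n.isLt]

theorem sum_prefixValue_sub (x : Fin N → Fin K) :
    ∑ n : Fin N, (prefixValue R x (n.1 + 1) - prefixValue R x n.1) = -Real.log (Z N K R) := by
  rw [Fin.sum_univ_eq_sum_range (fun m => prefixValue R x (m + 1) - prefixValue R x m),
    sum_range_sub, prefixValue_of_le R x le_rfl, prefixValue_of_le R x (Nat.zero_le N),
    Vstar_full_prefix, Vstar_empty_prefix, zero_sub]

end

theorem ancestral_sampling_correct_general (N K : ℕ)
    (R : (n : Fin N) → (Fin (n.1 + 1) → Fin K) → ℝ) (x : Fin N → Fin K) :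
    ∏ n : Fin N,
        Real.exp (Qstar N K R n (fun i => x (Fin.castLE n.isLt.le i)) (x n) -
          Vstar N K R n.1 n.isLt.le (fun i => x (Fin.castLE n.isLt.le i))) =
      gammaStar N K R x := by
  have : Nonempty (Fin N → Fin K) := ⟨x⟩
  calc _ = Real.exp (∑ n : Fin N, (R n (fun i => x (Fin.castLE n.isLt i)) +
          (prefixValue R x (n.1 + 1) - prefixValue R x n.1))) := by
        rw [Real.exp_sum]
        refine prod_congr rfl fun n _ => ?_
        rw [Qstar_prefix, prefixValue_of_le R x n.isLt.le, add_sub_assoc]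
    _ = gammaStar N K R x := by
        rw [sum_add_distrib, sum_prefixValue_sub, gammaStar_eq_exp, sub_eq_add_neg]

/-- **Correctness of ancestral sampling from the optimal policy:**
for every `x ∈ 𝕏`, `∏ₙ exp (Q*ₙ(xₙ|x_{<n}) − V*ₙ(x_{<n})) = γ*(x)`;
sampling each coordinate from the softmax of the optimal state-action values
yields exactly the normalized target density. -/
theorem ancestral_sampling_correct (N K : ℕ) (hN : 0 < N) (hK : 0 < K)
    (R : (n : Fin N) → (Fin (n.1 + 1) → Fin K) → ℝ) (x : Fin N → Fin K) :
    ∏ n : Fin N,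
        Real.exp (Qstar N K R n (fun i => x (Fin.castLE n.isLt.le i)) (x n) -
          Vstar N K R n.1 n.isLt.le (fun i => x (Fin.castLE n.isLt.le i))) =
      gammaStar N K R x :=
  ancestral_sampling_correct_general N K R x
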